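/- arXiv:2206.14418 — 2 statements merged into one kernel-verified Lean document; each statement's English description precedes it below -/
import Mathlib

section
/- Let σ : ℝ → ℝ be monotone and L-Lipschitz for some L > 0, i.e. 0 ≤ (σ(a) − σ(c))/(a − c) ≤ L for all reals a ≠ c, and assume L·‖A‖₂² ≤ 1. Then there exists a convex differentiable function φ : ℝⁿ → ℝ such that for every z ∈ ℝⁿ, z is a global minimizer of φ if and only if z is a solution of the equilibrium equation z = f(z). -/
open Matrix

/-- The L2 operator norm of a real matrix: the operator norm of the induced linear map
between Euclidean spaces. -/
noncomputable def l2OpNorm {α β : Type} [Fintype α] [Fintype β] [DecidableEq β]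
    (A : Matrix α β ℝ) : ℝ :=
  ‖LinearMap.toContinuousLinearMap (Matrix.toEuclideanLin A)‖

/-!
The equilibria are the critical points of the potential
`φ z = ‖z‖² / 2 + ∑ᵢ G((A (z + b))ᵢ)`, where `G t = ∫₀ᵗ σ` is a primitive of `σ`:
the gradient of `φ` at `z` is `z + Aᵀ σ(A (z + b)) = z - f z`.
Since `σ` is monotone, `G` is convex, hence so is `φ`, and a critical point of a convex
function is a global minimiser.
-/

open Set InnerProductSpace

theorem monotone_of_forall_div_sub_nonneg {σ : ℝ → ℝ}
    (h : ∀ a c : ℝ, a ≠ c → 0 ≤ (σ a - σ c) / (a - c)) : Monotone σ := by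
  intro a c hac
  rcases hac.eq_or_lt with rfl | hlt
  · rfl
  · exact (slope_nonneg_iff_of_le hac).1 (by simpa [slope_def_field] using h c a hlt.ne')

theorem lipschitzWith_of_forall_abs_div_sub_le {σ : ℝ → ℝ} {L : ℝ}
    (h : ∀ a c : ℝ, a ≠ c → |(σ a - σ c) / (a - c)| ≤ L) : LipschitzWith L.toNNReal σ := by
  refine LipschitzWith.of_dist_le' fun a c => ?_
  rcases eq_or_ne a c with rfl | hne
  · simp
  · rw [Real.dist_eq, Real.dist_eq, ← div_le_iff₀ (abs_pos.2 (sub_ne_zero.2 hne)), ← abs_div]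
    exact h a c hne

theorem convexOn_integral_of_monotone {σ : ℝ → ℝ} (hmono : Monotone σ) (hσ : Continuous σ) :
    ConvexOn ℝ univ fun t => ∫ s in (0 : ℝ)..t, σ s := by
  refine Monotone.convexOn_univ_of_deriv
    (fun t => (hσ.integral_hasStrictDerivAt 0 t).hasDerivAt.differentiableAt) ?_
  rwa [funext (hσ.deriv_integral σ 0)]

theorem ConvexOn.fun_sum {ι E : Type*} [AddCommGroup E] [Module ℝ E] {s : Set E}
    (hs : Convex ℝ s) {t : Finset ι} {F : ι → E → ℝ} (hF : ∀ i ∈ t, ConvexOn ℝ s (F i)) :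
    ConvexOn ℝ s fun z => ∑ i ∈ t, F i z := by
  simpa only [← Finset.sum_apply] using
    Finset.sum_induction F (ConvexOn ℝ s) (fun _ _ => ConvexOn.add) (convexOn_const 0 hs) hF

section Gradient

variable {E : Type*} [NormedAddCommGroup E] [InnerProductSpace ℝ E] [CompleteSpace E]

theorem HasGradientAt.add {φ ψ : E → ℝ} {g h z : E} (hφ : HasGradientAt φ g z)
    (hψ : HasGradientAt ψ h z) : HasGradientAt (fun x => φ x + ψ x) (g + h) z := by
  rw [hasGradientAt_iff_hasFDerivAt, map_add] at *
  exact hφ.add hψ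

theorem HasGradientAt.fun_sum {ι : Type*} {t : Finset ι} {F : ι → E → ℝ} {g : ι → E} {z : E}
    (hF : ∀ i ∈ t, HasGradientAt (F i) (g i) z) :
    HasGradientAt (fun x => ∑ i ∈ t, F i x) (∑ i ∈ t, g i) z := by
  simp only [hasGradientAt_iff_hasFDerivAt, map_sum] at hF ⊢
  exact HasFDerivAt.fun_sum hF

theorem hasGradientAt_half_norm_sq (z : E) : HasGradientAt (fun x : E => 2⁻¹ * ‖x‖ ^ 2) z z := by
  rw [hasGradientAt_iff_hasFDerivAt]
  refine ((hasFDerivAt_id z).norm_sq.const_mul 2⁻¹).congr_fderiv ?_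
  ext h
  simp

theorem ConvexOn.isMinOn_univ_iff_hasGradientAt_eq_zero {φ : E → ℝ} {g z : E}
    (hφ : ConvexOn ℝ univ φ) (hg : HasGradientAt φ g z) : IsMinOn φ univ z ↔ g = 0 := by
  rw [hasGradientAt_iff_hasFDerivAt] at hg
  constructor
  · intro hmin
    exact (map_eq_zero_iff _ (toDual ℝ E).injective).1
      ((hmin.isLocalMin Filter.univ_mem).hasFDerivAt_eq_zero hg)
  · rintro rfl u -
    have hline : HasDerivAt (φ ∘ AffineMap.lineMap z u) 0 (0 : ℝ) := by
      have hg' : HasFDerivAt φ (toDual ℝ E 0) (AffineMap.lineMap z u (0 : ℝ)) := by simpa using hg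
      simpa using hg'.comp_hasDerivAt (0 : ℝ) AffineMap.hasDerivAt_lineMap
    simpa [slope_def_field] using (hφ.comp_affineMap (AffineMap.lineMap z u)).le_slope_of_hasDerivAt
      (mem_univ 0) (mem_univ 1) zero_lt_one hline

end Gradient

theorem inner_toLp_row {ι κ : Type*} [Fintype κ] (A : Matrix ι κ ℝ) (i : ι)
    (v : EuclideanSpace ℝ κ) : ⟪WithLp.toLp 2 (A i), v⟫_ℝ = (A *ᵥ v) i := by
  simp [EuclideanSpace.inner_eq_star_dotProduct, mulVec, dotProduct_comm]

theorem sum_smul_toLp_row {ι κ : Type*} [Fintype ι] (A : Matrix ι κ ℝ) (s : ι → ℝ) :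
    ∑ i, s i • WithLp.toLp 2 (A i) = WithLp.toLp 2 (Aᵀ *ᵥ s) := by
  ext j
  simp [mulVec, dotProduct, mul_comm]

theorem hasFDerivAt_mulVec_add_apply {ι κ : Type*} [Fintype κ] (A : Matrix ι κ ℝ)
    (b z : EuclideanSpace ℝ κ) (i : ι) :
    HasFDerivAt (fun x : EuclideanSpace ℝ κ => (A *ᵥ (x + b)) i)
      (innerSL ℝ (WithLp.toLp 2 (A i))) z := by
  simpa [inner_toLp_row, mulVec_add] using
    ((innerSL ℝ (WithLp.toLp 2 (A i))).hasFDerivAt (x := z)).add_const ((A *ᵥ b) i)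

section Potential

variable {ι κ : Type*} [Fintype ι] [Fintype κ]

noncomputable def equilibriumPotential (A : Matrix ι κ ℝ) (b : EuclideanSpace ℝ κ) (σ : ℝ → ℝ)
    (z : EuclideanSpace ℝ κ) : ℝ :=
  2⁻¹ * ‖z‖ ^ 2 + ∑ i, ∫ s in (0 : ℝ)..(A *ᵥ (z + b)) i, σ s

variable (A : Matrix ι κ ℝ) (b : EuclideanSpace ℝ κ) {σ : ℝ → ℝ}

theorem convexOn_equilibriumPotential (hmono : Monotone σ) (hσ : Continuous σ) :
    ConvexOn ℝ univ (equilibriumPotential A b σ) := by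
  have hsq : ConvexOn ℝ univ fun z : EuclideanSpace ℝ κ => 2⁻¹ * ‖z‖ ^ 2 :=
    (convexOn_univ_norm.pow (fun _ _ => norm_nonneg _) 2).smul (by norm_num)
  refine hsq.add (ConvexOn.fun_sum convex_univ fun i _ => ?_)
  refine ((convexOn_integral_of_monotone hmono hσ).comp_affineMap
    ((innerSL ℝ (WithLp.toLp 2 (A i))).toLinearMap.toAffineMap +
      AffineMap.const ℝ _ ((A *ᵥ b) i))).congr fun z _ => ?_
  simp [inner_toLp_row, mulVec_add]

theorem hasGradientAt_equilibriumPotential (hσ : Continuous σ) (z : EuclideanSpace ℝ κ) :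
    HasGradientAt (equilibriumPotential A b σ)
      (z + WithLp.toLp 2 (Aᵀ *ᵥ fun i => σ ((A *ᵥ (z + b)) i))) z := by
  have hterm (i : ι) :
      HasGradientAt (fun x : EuclideanSpace ℝ κ => ∫ s in (0 : ℝ)..(A *ᵥ (x + b)) i, σ s)
        (σ ((A *ᵥ (z + b)) i) • WithLp.toLp 2 (A i)) z := by
    rw [hasGradientAt_iff_hasFDerivAt, map_smul]
    exact (hσ.integral_hasStrictDerivAt 0 _).hasDerivAt.comp_hasFDerivAt z
      (hasFDerivAt_mulVec_add_apply A b z i)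
  rw [← sum_smul_toLp_row]
  exact (hasGradientAt_half_norm_sq z).add (HasGradientAt.fun_sum fun i _ => hterm i)

end Potential

theorem stmt1_general {m n : ℕ} (A : Matrix (Fin m) (Fin n) ℝ) (b : EuclideanSpace ℝ (Fin n))
    (σ : ℝ → ℝ) (L : ℝ)
    (hσ : ∀ a c : ℝ, a ≠ c →
      0 ≤ (σ a - σ c) / (a - c) ∧ (σ a - σ c) / (a - c) ≤ L)
    (f : EuclideanSpace ℝ (Fin n) → EuclideanSpace ℝ (Fin n))
    (hf : ∀ z, f z = -(Aᵀ.mulVec (fun i => σ (A.mulVec (z + b) i)))) :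
    ∃ φ : EuclideanSpace ℝ (Fin n) → ℝ,
      ConvexOn ℝ Set.univ φ ∧ Differentiable ℝ φ ∧
      ∀ z, (∀ u, φ z ≤ φ u) ↔ z = f z := by
  have hmono : Monotone σ := monotone_of_forall_div_sub_nonneg fun a c hac => (hσ a c hac).1
  have hcont : Continuous σ :=
    (lipschitzWith_of_forall_abs_div_sub_le (L := L) fun a c hac =>
      abs_le.2 ⟨by linarith [hσ a c hac], (hσ a c hac).2⟩).continuous
  have hconv := convexOn_equilibriumPotential A b hmono hcont
  have hgrad := hasGradientAt_equilibriumPotential A b hcont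
  have hresidual : ∀ z, z - f z = z + WithLp.toLp 2 (Aᵀ *ᵥ fun i => σ ((A *ᵥ (z + b)) i)) := by
    intro z
    ext j
    simp [hf]
  refine ⟨_, hconv, fun z => (hgrad z).differentiableAt, fun z => ?_⟩
  rw [← isMinOn_univ_iff, hconv.isMinOn_univ_iff_hasGradientAt_eq_zero (hgrad z), ← hresidual,
    sub_eq_zero]

/-- If `σ` is monotone and `L`-Lipschitz with `L‖A‖₂² ≤ 1`, then there exists a
convex differentiable function `φ` whose global minimizers are exactly the solutions of the
equilibrium equation `z = f z`, where `f z = −Aᵀ σ (A (z + b))`. -/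
theorem stmt1 {m n : ℕ} (A : Matrix (Fin m) (Fin n) ℝ) (b : EuclideanSpace ℝ (Fin n))
    (σ : ℝ → ℝ) (L : ℝ) (hL : 0 < L)
    (hσ : ∀ a c : ℝ, a ≠ c →
      0 ≤ (σ a - σ c) / (a - c) ∧ (σ a - σ c) / (a - c) ≤ L)
    (hA : L * l2OpNorm A ^ 2 ≤ 1)
    (f : EuclideanSpace ℝ (Fin n) → EuclideanSpace ℝ (Fin n))
    (hf : ∀ z, f z = -(Aᵀ.mulVec (fun i => σ (A.mulVec (z + b) i)))) :
    ∃ φ : EuclideanSpace ℝ (Fin n) → ℝ,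
      ConvexOn ℝ Set.univ φ ∧ Differentiable ℝ φ ∧
      ∀ z, (∀ u, φ z ≤ φ u) ↔ z = f z :=
  stmt1_general A b σ L hσ f hf
end

section
/- Let σ : ℝ → ℝ be monotone and 1-Lipschitz, i.e. 0 ≤ (σ(a) − σ(c))/(a − c) ≤ 1 for all reals a ≠ c, and assume ‖A‖₂ ≤ 1. Then the map g : ℝⁿ → ℝⁿ defined by g(z) = (1/2)(z + f(z)) is nonexpansive: ‖g(z) − g(z′)‖ ≤ ‖z − z′‖ for all z, z′ ∈ ℝⁿ. -/
open Matrix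

/-!
Since `σ` is 1-Lipschitz and `‖Aᵀ‖₂ = ‖A‖₂ ≤ 1`, the map `f` is a composition of 1-Lipschitz maps,
hence 1-Lipschitz, and `g`, the average of the identity and `f`, is then 1-Lipschitz as well.
-/

open scoped NNReal

theorem lipschitzWith_one_of_abs_slope_le {σ : ℝ → ℝ}
    (h : ∀ a c : ℝ, a ≠ c → |(σ a - σ c) / (a - c)| ≤ 1) : LipschitzWith 1 σ := by
  refine LipschitzWith.of_dist_le_mul fun a c => ?_
  rw [NNReal.coe_one, one_mul, Real.dist_eq, Real.dist_eq]
  rcases eq_or_ne a c with rfl | hac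
  · simp
  · have hslope : σ a - σ c = (σ a - σ c) / (a - c) * (a - c) :=
      (div_mul_cancel₀ _ (sub_ne_zero.2 hac)).symm
    rw [hslope, abs_mul]
    exact mul_le_of_le_one_left (abs_nonneg _) (h a c hac)

theorem LipschitzWith.euclideanSpace_map {ι : Type*} [Fintype ι] {K : ℝ≥0} {σ : ℝ → ℝ}
    (hσ : LipschitzWith K σ) :
    LipschitzWith K fun v : EuclideanSpace ℝ ι => WithLp.toLp 2 fun i => σ (v i) := by
  refine lipschitzWith_iff_norm_sub_le.2 fun v w => ?_
  refine le_of_sq_le_sq ?_ (by positivity)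
  simp only [mul_pow, EuclideanSpace.norm_sq_eq, Finset.mul_sum]
  refine Finset.sum_le_sum fun i _ => ?_
  simpa [mul_pow, sq_abs] using pow_le_pow_left₀ (norm_nonneg _) (hσ.norm_sub_le (v i) (w i)) 2

theorem lipschitzWith_toEuclideanLin {α β : Type} [Fintype α] [Fintype β] [DecidableEq β]
    {A : Matrix α β ℝ} {K : ℝ≥0} (hA : l2OpNorm A ≤ K) :
    LipschitzWith K (toEuclideanLin A) :=
  (LinearMap.toContinuousLinearMap (toEuclideanLin A)).lipschitz.weaken hA

theorem l2OpNorm_transpose {α β : Type} [Fintype α] [Fintype β] [DecidableEq α] [DecidableEq β]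
    (A : Matrix α β ℝ) : l2OpNorm Aᵀ = l2OpNorm A := by
  rw [l2OpNorm, ← conjTranspose_eq_transpose_of_trivial, toEuclideanLin_conjTranspose_eq_adjoint,
    LinearMap.adjoint_toContinuousLinearMap]
  exact LinearIsometryEquiv.norm_map _ _

theorem LipschitzWith.half_smul_add_self {E : Type*} [SeminormedAddCommGroup E] [NormedSpace ℝ E]
    {f : E → E} (hf : LipschitzWith 1 f) : LipschitzWith 1 fun z => (1 / 2 : ℝ) • (z + f z) := by
  have := (lipschitzWith_smul (1 / 2 : ℝ)).comp (LipschitzWith.id.add hf)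
  convert this using 1
  · norm_num
  · rfl

/-- For `σ` monotone and 1-Lipschitz and `‖A‖₂ ≤ 1`, the map
`g z = (1/2)(z + f z)`, where `f z = −Aᵀ σ (A (z + b))`, is nonexpansive. -/
theorem stmt8 {m n : ℕ} (A : Matrix (Fin m) (Fin n) ℝ) (b : EuclideanSpace ℝ (Fin n))
    (σ : ℝ → ℝ)
    (hσ : ∀ a c : ℝ, a ≠ c →
      0 ≤ (σ a - σ c) / (a - c) ∧ (σ a - σ c) / (a - c) ≤ 1)
    (hA : l2OpNorm A ≤ 1)
    (f g : EuclideanSpace ℝ (Fin n) → EuclideanSpace ℝ (Fin n))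
    (hf : ∀ z, f z = -(Aᵀ.mulVec (fun i => σ (A.mulVec (z + b) i))))
    (hg : ∀ z, g z = (1/2 : ℝ) • (z + f z)) :
    ∀ z z' : EuclideanSpace ℝ (Fin n), ‖g z - g z'‖ ≤ ‖z - z'‖ := by
  have hσ_lip : LipschitzWith 1 σ := lipschitzWith_one_of_abs_slope_le fun a c hac =>
    abs_le.2 ⟨by linarith [(hσ a c hac).1], (hσ a c hac).2⟩
  have hA_lip : LipschitzWith 1 (toEuclideanLin A) := lipschitzWith_toEuclideanLin (by simpa)
  have hAt_lip : LipschitzWith 1 (toEuclideanLin Aᵀ) :=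
    lipschitzWith_toEuclideanLin (by simpa [l2OpNorm_transpose])
  have hf_eq : f = fun z => -toEuclideanLin Aᵀ
      (WithLp.toLp 2 fun i => σ (toEuclideanLin A (z + b) i)) := by
    funext z
    ext i
    simp [hf, mulVec_add]
  have hf_lip : LipschitzWith 1 f := by
    rw [hf_eq]
    exact ((hAt_lip.comp (hσ_lip.euclideanSpace_map.comp (hA_lip.comp
      (LipschitzWith.id.add (LipschitzWith.const b))))).neg).weaken (by norm_num)
  intro z z'
  simpa [hg] using hf_lip.half_smul_add_self.norm_sub_le z z'
end
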